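/- Let v : ℚ_2ˣ → ℤ be the 2-adic valuation, and for x ∈ ℚ_2ˣ write x = 2^{v(x)} u_x with u_x ∈ ℤ_2ˣ. For a 2-adic unit u ∈ ℤ_2ˣ, let ε(u) ∈ ℤ/2ℤ be the reduction of (u - 1)/2 (which lies in ℤ_2) and ω(u) ∈ ℤ/2ℤ the reduction of (u² - 1)/8 (which lies in ℤ_2). Define s_2 : ℚ_2ˣ × ℚ_2ˣ → {1, -1} by s_2(x, y) = (-1)^{ε(u_x)ε(u_y) + v(x)ω(u_y) + v(y)ω(u_x)}. Then s_2 is a symbol on ℚ_2 with values in {1, -1}: it is multiplicative in each variable and s_2(x, y) = 1 whenever x + y = 1. -/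

import Mathlib

/-!
Write `x = 2^m a` and `y = 2^n b`. Since `v` is additive, `u` multiplicative and `ε`, `ω` turn
products of units into sums, the exponent of `s₂` is bi-additive, so only `x + y = 1` needs work.
Comparing 2-adic norms and reducing mod 2 in `2^m a + 2^n b = 1` leaves, up to symmetry, two
shapes: `n = 0 < m`, i.e. `b = 1 - 2^m a`, which is a direct computation; and `m = n = -k < 0`,
i.e. `a + b = 2^k`, which reduces to the first shape through `-b a⁻¹ = 1 - 2^k a⁻¹`, since
`ε(-1) = 1` and `ω(-1) = 0`.
-/

def IsMulSymbol {F A : Type*} [Field F] [CommGroup A] (s : Fˣ → Fˣ → A) : Prop :=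
  (∀ x x' y : Fˣ, s (x * x') y = s x y * s x' y) ∧
  (∀ x y y' : Fˣ, s x (y * y') = s x y * s x y') ∧
  (∀ x y : Fˣ, (x : F) + (y : F) = 1 → s x y = 1)

open PadicInt

lemma isMulSymbol_neg_one_pow_val {F : Type*} [Field F] (e : Fˣ → Fˣ → ZMod 2)
    (add_left : ∀ x x' y, e (x * x') y = e x y + e x' y)
    (add_right : ∀ x y y', e x (y * y') = e x y + e x y')
    (eq_zero : ∀ x y : Fˣ, (x : F) + y = 1 → e x y = 0) :
    IsMulSymbol fun x y => (-1 : ℤˣ) ^ (e x y).val := by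
  have pow_add (f g : ZMod 2) : (-1 : ℤˣ) ^ (f + g).val = (-1) ^ f.val * (-1) ^ g.val := by
    revert f g; decide
  refine ⟨fun x x' y => ?_, fun x y y' => ?_, fun x y h => ?_⟩ <;> dsimp only
  · rw [add_left, pow_add]
  · rw [add_right, pow_add]
  · rw [eq_zero x y h, ZMod.val_zero, pow_zero]

@[simp, norm_cast]
lemma PadicInt.coe_ofNat {p : ℕ} [Fact p.Prime] (n : ℕ) [n.AtLeastTwo] :
    ((ofNat(n) : ℤ_[p]) : ℚ_[p]) = ofNat(n) :=
  coe_natCast n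

section Decomposition

variable {p : ℕ} [Fact p.Prime]

lemma Padic.norm_prime_zpow_mul_unit (m : ℤ) (a : ℤ_[p]ˣ) :
    ‖(p : ℚ_[p]) ^ m * ((a : ℤ_[p]) : ℚ_[p])‖ = (p : ℝ) ^ (-m) := by
  rw [norm_mul, norm_zpow, Padic.norm_p, padic_norm_e_of_padicInt, norm_units, mul_one,
    inv_zpow']

lemma Padic.eq_of_prime_zpow_mul_unit_eq {m n : ℤ} {a b : ℤ_[p]ˣ}
    (h : (p : ℚ_[p]) ^ m * ((a : ℤ_[p]) : ℚ_[p]) = (p : ℚ_[p]) ^ n * ((b : ℤ_[p]) : ℚ_[p])) :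
    m = n ∧ a = b := by
  have hp : (1 : ℝ) < p := mod_cast (Fact.out : p.Prime).one_lt
  have hmn : m = n := by
    have := congrArg norm h
    rw [norm_prime_zpow_mul_unit, norm_prime_zpow_mul_unit] at this
    exact neg_injective (zpow_right_injective₀ (by positivity) hp.ne' this)
  subst hmn
  refine ⟨rfl, Units.ext (PadicInt.ext (mul_left_cancel₀ ?_ h))⟩
  exact zpow_ne_zero _ (Nat.cast_ne_zero.2 (Fact.out : p.Prime).ne_zero)

lemma Padic.valuation_mul_and_unit_mul (v : ℚ_[p]ˣ → ℤ) (u : ℚ_[p]ˣ → ℤ_[p]ˣ)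
    (hvu : ∀ x : ℚ_[p]ˣ, (x : ℚ_[p]) = (p : ℚ_[p]) ^ v x * ((u x : ℤ_[p]) : ℚ_[p]))
    (x y : ℚ_[p]ˣ) : v (x * y) = v x + v y ∧ u (x * y) = u x * u y := by
  apply eq_of_prime_zpow_mul_unit_eq
  rw [← hvu, Units.val_mul, hvu x, hvu y, zpow_add₀ (by simp [(Fact.out : p.Prime).ne_zero])]
  push_cast
  ring

end Decomposition

lemma PadicInt.toZMod_two_mul (t : ℤ_[2]) : toZMod (2 * t) = 0 := by
  rw [map_mul, map_ofNat, show (2 : ZMod 2) = 0 from rfl, zero_mul]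

lemma PadicInt.toZMod_units_eq_one (a : ℤ_[2]ˣ) : toZMod (a : ℤ_[2]) = 1 := by
  have h := (a.isUnit.map toZMod).ne_zero
  revert h
  generalize toZMod (a : ℤ_[2]) = x
  decide +revert

/-- The exponent of `s₂(2^m a, 2^n b)`. -/
def hilbertExponent (ε ω : ℤ_[2]ˣ → ZMod 2) (m : ℤ) (a : ℤ_[2]ˣ) (n : ℤ) (b : ℤ_[2]ˣ) :
    ZMod 2 :=
  ε a * ε b + m * ω b + n * ω a

section HilbertExponent

variable {ε ω : ℤ_[2]ˣ → ZMod 2}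

lemma hilbertExponent_comm (m : ℤ) (a : ℤ_[2]ˣ) (n : ℤ) (b : ℤ_[2]ˣ) :
    hilbertExponent ε ω m a n b = hilbertExponent ε ω n b m a := by
  unfold hilbertExponent
  ring

section Epsilon

variable (hε : ∀ a : ℤ_[2]ˣ, ∃ b : ℤ_[2], (a : ℤ_[2]) = 1 + 2 * b ∧ ε a = toZMod b)
include hε

lemma eps_eq_toZMod {a : ℤ_[2]ˣ} {b : ℤ_[2]} (h : (a : ℤ_[2]) = 1 + 2 * b) :
    ε a = toZMod b := by
  obtain ⟨b', hb', hεa⟩ := hε a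
  rw [hεa, mul_left_cancel₀ two_ne_zero (add_left_cancel (hb'.symm.trans h))]

lemma eps_mul (a a' : ℤ_[2]ˣ) : ε (a * a') = ε a + ε a' := by
  obtain ⟨b, hb, hεa⟩ := hε a
  obtain ⟨b', hb', hεa'⟩ := hε a'
  rw [eps_eq_toZMod hε (b := b + b' + 2 * (b * b')) (by rw [Units.val_mul, hb, hb']; ring),
    map_add, toZMod_two_mul, add_zero, map_add, hεa, hεa']

lemma eps_neg_one : ε (-1) = 1 := by
  rw [eps_eq_toZMod hε (b := -1) (by norm_num), map_neg, map_one]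
  rfl

lemma eps_inv (a : ℤ_[2]ˣ) : ε a⁻¹ = ε a := by
  have h := eps_mul hε a a⁻¹
  rw [mul_inv_cancel, eps_eq_toZMod hε (b := 0) (by simp), map_zero] at h
  exact (eq_neg_of_add_eq_zero_right h.symm).trans (ZMod.neg_eq_self_mod_two _)

end Epsilon

section Omega

variable (hω : ∀ a : ℤ_[2]ˣ, ∃ c : ℤ_[2], (a : ℤ_[2]) ^ 2 = 1 + 8 * c ∧ ω a = toZMod c)
include hω

lemma omega_eq_toZMod {a : ℤ_[2]ˣ} {c : ℤ_[2]} (h : (a : ℤ_[2]) ^ 2 = 1 + 8 * c) :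
    ω a = toZMod c := by
  obtain ⟨c', hc', hωa⟩ := hω a
  rw [hωa, mul_left_cancel₀ (by norm_num) (add_left_cancel (hc'.symm.trans h))]

lemma omega_mul (a a' : ℤ_[2]ˣ) : ω (a * a') = ω a + ω a' := by
  obtain ⟨c, hc, hωa⟩ := hω a
  obtain ⟨c', hc', hωa'⟩ := hω a'
  rw [omega_eq_toZMod hω (c := c + c' + 2 * (4 * c * c'))
      (by rw [Units.val_mul, mul_pow, hc, hc']; ring),
    map_add, toZMod_two_mul, add_zero, map_add, hωa, hωa']

lemma omega_neg_one : ω (-1) = 0 := by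
  rw [omega_eq_toZMod hω (c := 0) (by norm_num), map_zero]

lemma omega_inv (a : ℤ_[2]ˣ) : ω a⁻¹ = ω a := by
  have h := omega_mul hω a a⁻¹
  rw [mul_inv_cancel, omega_eq_toZMod hω (c := 0) (by simp), map_zero] at h
  exact (eq_neg_of_add_eq_zero_right h.symm).trans (ZMod.neg_eq_self_mod_two _)

end Omega

variable (hε : ∀ a : ℤ_[2]ˣ, ∃ b : ℤ_[2], (a : ℤ_[2]) = 1 + 2 * b ∧ ε a = toZMod b)
variable (hω : ∀ a : ℤ_[2]ˣ, ∃ c : ℤ_[2], (a : ℤ_[2]) ^ 2 = 1 + 8 * c ∧ ω a = toZMod c)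
include hε hω

lemma hilbertExponent_of_eq_one_sub {a c : ℤ_[2]ˣ} {k : ℕ}
    (h : (c : ℤ_[2]) = 1 - 2 ^ (k + 1) * a) : hilbertExponent ε ω (k + 1) a 0 c = 0 := by
  obtain ⟨β, ha, hεa⟩ := hε a
  have hεc : ε c = toZMod (-(2 ^ k * a : ℤ_[2])) := eps_eq_toZMod hε (by rw [h]; ring)
  unfold hilbertExponent
  rcases k with _ | _ | k
  · have hωc : ω c = toZMod (a * β : ℤ_[2]) :=
      omega_eq_toZMod hω (by rw [h]; linear_combination (4 * (a : ℤ_[2])) * ha)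
    rw [hεc, hωc, map_mul, map_neg, pow_zero, one_mul, toZMod_units_eq_one, one_mul, ← hεa]
    push_cast
    ring
  · rw [hεc, pow_one, ← mul_neg, toZMod_two_mul]
    push_cast
    ring_nf
    reduce_mod_char
  · have hωc : ω c = 0 := by
      rw [omega_eq_toZMod hω (c := 2 * (2 ^ k * (2 ^ (k + 2) * a ^ 2 - a))) (by rw [h]; ring),
        toZMod_two_mul]
    rw [hεc, hωc, pow_succ', mul_assoc, ← mul_neg, toZMod_two_mul]
    ring

lemma hilbertExponent_of_add_eq_two_pow {a b : ℤ_[2]ˣ} {k : ℕ}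
    (h : (a : ℤ_[2]) + b = 2 ^ (k + 1)) :
    hilbertExponent ε ω (-(k + 1)) a (-(k + 1)) b = 0 := by
  have hc : ((-1 * b * a⁻¹ : ℤ_[2]ˣ) : ℤ_[2]) = 1 - 2 ^ (k + 1) * (a⁻¹ : ℤ_[2]ˣ) := by
    rw [← h]
    push_cast
    linear_combination a.mul_inv
  have hA := hilbertExponent_of_eq_one_sub hε hω hc
  unfold hilbertExponent at hA ⊢
  rw [eps_mul hε, eps_mul hε, omega_mul hω, omega_mul hω, eps_neg_one hε, omega_neg_one hω,
    eps_inv hε, omega_inv hω] at hA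
  linear_combination (norm := skip) hA + ZMod.pow_card (ε a)
  push_cast
  ring_nf
  reduce_mod_char

lemma hilbertExponent_of_two_zpow_mul_add_eq_one {m n : ℤ} {a b : ℤ_[2]ˣ}
    (h : (2 : ℚ_[2]) ^ m * ((a : ℤ_[2]) : ℚ_[2]) + 2 ^ n * ((b : ℤ_[2]) : ℚ_[2]) = 1) :
    hilbertExponent ε ω m a n b = 0 := by
  wlog hnm : n ≤ m generalizing m n a b
  · rw [hilbertExponent_comm]
    exact this (by rwa [add_comm]) (by omega)
  have hnorm (k : ℤ) (c : ℤ_[2]ˣ) : ‖(2 : ℚ_[2]) ^ k * ((c : ℤ_[2]) : ℚ_[2])‖ = 2 ^ (-k) := by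
    exact_mod_cast Padic.norm_prime_zpow_mul_unit k c
  rcases hnm.lt_or_eq with hlt | rfl
  · have hn : n = 0 := by
      have hlt' : ‖(2 : ℚ_[2]) ^ m * ((a : ℤ_[2]) : ℚ_[2])‖
          < ‖(2 : ℚ_[2]) ^ n * ((b : ℤ_[2]) : ℚ_[2])‖ := by
        rw [hnorm, hnorm]
        exact zpow_lt_zpow_right₀ one_lt_two (neg_lt_neg hlt)
      have hmax := Padic.add_eq_max_of_ne hlt'.ne
      rw [h, norm_one, max_eq_right hlt'.le, hnorm] at hmax
      exact neg_eq_zero.1 ((zpow_eq_one_iff_right₀ zero_le_two (by norm_num)).1 hmax.symm)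
    subst hn
    obtain ⟨k, rfl⟩ : ∃ k : ℕ, m = k + 1 := ⟨m.toNat - 1, by omega⟩
    apply hilbertExponent_of_eq_one_sub hε hω
    apply PadicInt.ext
    push_cast
    rw [zpow_zero, one_mul, show (k : ℤ) + 1 = ((k + 1 : ℕ) : ℤ) by push_cast; ring,
      zpow_natCast] at h
    linear_combination h
  · have hab : toZMod ((a : ℤ_[2]) + (b : ℤ_[2])) = 0 := by
      rw [map_add, toZMod_units_eq_one, toZMod_units_eq_one]
      rfl
    obtain ⟨k, rfl | rfl⟩ := Int.eq_nat_or_neg n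
    · have : (2 : ℤ_[2]) ^ k * ((a : ℤ_[2]) + (b : ℤ_[2])) = 1 := by
        apply PadicInt.ext
        push_cast
        rw [zpow_natCast] at h
        linear_combination h
      simpa [hab] using congrArg toZMod this
    · have hsum : (a : ℤ_[2]) + (b : ℤ_[2]) = 2 ^ k := by
        apply PadicInt.ext
        push_cast
        rw [zpow_neg, zpow_natCast] at h
        field_simp at h
        linear_combination h
      obtain ⟨j, rfl⟩ : ∃ j, k = j + 1 :=
        Nat.exists_eq_succ_of_ne_zero (by rintro rfl; simp [hsum] at hab)
      simpa using hilbertExponent_of_add_eq_two_pow hε hω hsum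

end HilbertExponent

/-- Given the decomposition `x = 2^(v x) · u x` of each `x ∈ ℚ_2ˣ` (with `u x ∈ ℤ_2ˣ`),
and `ε, ω : ℤ_2ˣ → ℤ/2ℤ` the reductions mod 2 of `(u-1)/2` and `(u²-1)/8`, the map
`s₂(x,y) = (-1)^(ε(u_x)ε(u_y) + v(x)ω(u_y) + v(y)ω(u_x))` is a symbol on `ℚ_2` with
values in `{1, -1} = ℤˣ`. -/
theorem s2_isMulSymbol
    (v : ℚ_[2]ˣ → ℤ) (u : ℚ_[2]ˣ → ℤ_[2]ˣ)
    (hvu : ∀ x : ℚ_[2]ˣ, (x : ℚ_[2]) = 2 ^ (v x) * ((u x : ℤ_[2]) : ℚ_[2]))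
    (ε ω : ℤ_[2]ˣ → ZMod 2)
    (hε : ∀ a : ℤ_[2]ˣ, ∃ b : ℤ_[2], (a : ℤ_[2]) = 1 + 2 * b ∧ ε a = PadicInt.toZMod b)
    (hω : ∀ a : ℤ_[2]ˣ, ∃ c : ℤ_[2], (a : ℤ_[2]) ^ 2 = 1 + 8 * c ∧ ω a = PadicInt.toZMod c) :
    IsMulSymbol (fun x y : ℚ_[2]ˣ =>
      (-1 : ℤˣ) ^
        (ε (u x) * ε (u y) + (v x : ZMod 2) * ω (u y) + (v y : ZMod 2) * ω (u x)).val) := by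
  have hmul := Padic.valuation_mul_and_unit_mul v u (by exact_mod_cast hvu)
  refine isMulSymbol_neg_one_pow_val (fun x y => hilbertExponent ε ω (v x) (u x) (v y) (u y))
    (fun x x' y => ?_) (fun x y y' => ?_) (fun x y hxy => ?_)
  · simp only [hilbertExponent, hmul, eps_mul hε, omega_mul hω]
    push_cast
    ring
  · simp only [hilbertExponent, hmul, eps_mul hε, omega_mul hω]
    push_cast
    ring
  · rw [hvu x, hvu y] at hxy
    exact hilbertExponent_of_two_zpow_mul_add_eq_one hε hω hxy
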